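/- arXiv:0904.3594 — 3 statements merged into one kernel-verified Lean document; each statement's English description precedes it below -/
import Mathlib

section
/- The Chen system with parameters a' = 45, b' = 5, c' = 28 is not smoothly equivalent to the Lorenz system with parameters a, b, c, for any choice of real numbers a, b, c. -/
noncomputable def jacobianMatrix {n : ℕ} (h : (Fin n → ℝ) → (Fin n → ℝ)) (x : Fin n → ℝ) :
    Matrix (Fin n) (Fin n) ℝ :=
  LinearMap.toMatrix' (fderiv ℝ h x).toLinearMap

def SmoothlyEquivalent {n : ℕ} (f g : (Fin n → ℝ) → (Fin n → ℝ)) : Prop :=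
  ∃ h hinv : (Fin n → ℝ) → (Fin n → ℝ),
    Function.LeftInverse hinv h ∧ Function.RightInverse hinv h ∧
    ContDiff ℝ (⊤ : ℕ∞) h ∧ ContDiff ℝ (⊤ : ℕ∞) hinv ∧
    ∀ x, IsUnit (jacobianMatrix h x).det ∧
      f x = ((jacobianMatrix h x)⁻¹).mulVec (g (h x))

def lorenz (a b c : ℝ) (p : Fin 3 → ℝ) : Fin 3 → ℝ :=
  ![a * (p 1 - p 0), c * p 0 - p 0 * p 2 - p 1, p 0 * p 1 - b * p 2]

def chen (a b c : ℝ) (p : Fin 3 → ℝ) : Fin 3 → ℝ :=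
  ![a * (p 1 - p 0), (c - a) * p 0 - p 0 * p 2 + c * p 1, p 0 * p 1 - b * p 2]

/-! Auxiliary material -/

noncomputable def mkCLM (M : Matrix (Fin 3) (Fin 3) ℝ) : (Fin 3 → ℝ) →L[ℝ] (Fin 3 → ℝ) :=
  LinearMap.toContinuousLinearMap (Matrix.toLin' M)

lemma mkCLM_apply (M : Matrix (Fin 3) (Fin 3) ℝ) (v : Fin 3 → ℝ) :
    mkCLM M v = M.mulVec v := by
  simp [mkCLM, Matrix.toLin'_apply]

def lorenzJ (a b c : ℝ) (p : Fin 3 → ℝ) : Matrix (Fin 3) (Fin 3) ℝ :=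
  ![![-a, a, 0], ![c - p 2, -1, -(p 0)], ![p 1, p 0, -b]]

def chenJ (a b c : ℝ) (p : Fin 3 → ℝ) : Matrix (Fin 3) (Fin 3) ℝ :=
  ![![-a, a, 0], ![(c - a) - p 2, c, -(p 0)], ![p 1, p 0, -b]]

lemma hasFDerivAt_lorenz (a b c : ℝ) (p : Fin 3 → ℝ) :
    HasFDerivAt (lorenz a b c) (mkCLM (lorenzJ a b c p)) p := by
  apply hasFDerivAt_pi''
  intro i
  fin_cases i
  · have e : (ContinuousLinearMap.proj (⟨0, by norm_num⟩ : Fin 3)).comp (mkCLM (lorenzJ a b c p)) =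
        a • ((ContinuousLinearMap.proj 1 : (Fin 3 → ℝ) →L[ℝ] ℝ) - ContinuousLinearMap.proj 0) := by
      ext v
      simp [mkCLM_apply]
      simp [mkCLM_apply, lorenzJ, Matrix.mulVec, dotProduct, Fin.sum_univ_three]
      ring
    rw [e]
    exact ((hasFDerivAt_apply 1 p).sub (hasFDerivAt_apply 0 p)).const_mul a
  · have e : (ContinuousLinearMap.proj (⟨1, by norm_num⟩ : Fin 3)).comp (mkCLM (lorenzJ a b c p)) =
        (c • (ContinuousLinearMap.proj 0 : (Fin 3 → ℝ) →L[ℝ] ℝ)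
          - ((p 0) • ContinuousLinearMap.proj 2 + (p 2) • ContinuousLinearMap.proj 0)
          - ContinuousLinearMap.proj 1) := by
      ext v
      simp [mkCLM_apply]
      simp [mkCLM_apply, lorenzJ, Matrix.mulVec, dotProduct, Fin.sum_univ_three]
      ring
    rw [e]
    exact (((hasFDerivAt_apply 0 p).const_mul c).sub
      ((hasFDerivAt_apply 0 p).mul (hasFDerivAt_apply 2 p))).sub (hasFDerivAt_apply 1 p)
  · have e : (ContinuousLinearMap.proj (⟨2, by norm_num⟩ : Fin 3)).comp (mkCLM (lorenzJ a b c p)) =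
        (((p 0) • ContinuousLinearMap.proj 1 + (p 1) • ContinuousLinearMap.proj 0)
          - b • (ContinuousLinearMap.proj 2 : (Fin 3 → ℝ) →L[ℝ] ℝ)) := by
      ext v
      simp [mkCLM_apply]
      simp [mkCLM_apply, lorenzJ, Matrix.mulVec, dotProduct, Fin.sum_univ_three]
      ring
    rw [e]
    exact ((hasFDerivAt_apply 0 p).mul (hasFDerivAt_apply 1 p)).sub
      ((hasFDerivAt_apply 2 p).const_mul b)

lemma hasFDerivAt_chen (a b c : ℝ) (p : Fin 3 → ℝ) :
    HasFDerivAt (chen a b c) (mkCLM (chenJ a b c p)) p := by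
  apply hasFDerivAt_pi''
  intro i
  fin_cases i
  · have e : (ContinuousLinearMap.proj (⟨0, by norm_num⟩ : Fin 3)).comp (mkCLM (chenJ a b c p)) =
        a • ((ContinuousLinearMap.proj 1 : (Fin 3 → ℝ) →L[ℝ] ℝ) - ContinuousLinearMap.proj 0) := by
      ext v
      simp [mkCLM_apply]
      simp [mkCLM_apply, chenJ, Matrix.mulVec, dotProduct, Fin.sum_univ_three]
      ring
    rw [e]
    exact ((hasFDerivAt_apply 1 p).sub (hasFDerivAt_apply 0 p)).const_mul a
  · have e : (ContinuousLinearMap.proj (⟨1, by norm_num⟩ : Fin 3)).comp (mkCLM (chenJ a b c p)) =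
        ((c - a) • (ContinuousLinearMap.proj 0 : (Fin 3 → ℝ) →L[ℝ] ℝ)
          - ((p 0) • ContinuousLinearMap.proj 2 + (p 2) • ContinuousLinearMap.proj 0)
          + c • ContinuousLinearMap.proj 1) := by
      ext v
      simp [mkCLM_apply]
      simp [mkCLM_apply, chenJ, Matrix.mulVec, dotProduct, Fin.sum_univ_three]
      ring
    rw [e]
    exact ((((hasFDerivAt_apply 0 p).const_mul (c - a)).sub
      ((hasFDerivAt_apply 0 p).mul (hasFDerivAt_apply 2 p))).add
      ((hasFDerivAt_apply 1 p).const_mul c))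
  · have e : (ContinuousLinearMap.proj (⟨2, by norm_num⟩ : Fin 3)).comp (mkCLM (chenJ a b c p)) =
        (((p 0) • ContinuousLinearMap.proj 1 + (p 1) • ContinuousLinearMap.proj 0)
          - b • (ContinuousLinearMap.proj 2 : (Fin 3 → ℝ) →L[ℝ] ℝ)) := by
      ext v
      simp [mkCLM_apply]
      simp [mkCLM_apply, chenJ, Matrix.mulVec, dotProduct, Fin.sum_univ_three]
      ring
    rw [e]
    exact ((hasFDerivAt_apply 0 p).mul (hasFDerivAt_apply 1 p)).sub
      ((hasFDerivAt_apply 2 p).const_mul b)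

lemma jac_eq {F : (Fin 3 → ℝ) → (Fin 3 → ℝ)} {J : Matrix (Fin 3) (Fin 3) ℝ} {p : Fin 3 → ℝ}
    (h : HasFDerivAt F (mkCLM J) p) : jacobianMatrix F p = J := by
  rw [jacobianMatrix, h.fderiv]
  simp [mkCLM]

lemma jac_mulVec {n : ℕ} (h : (Fin n → ℝ) → (Fin n → ℝ)) (x : Fin n → ℝ) (v : Fin n → ℝ) :
    (jacobianMatrix h x).mulVec v = (fderiv ℝ h x) v := by
  simp [jacobianMatrix, ← Matrix.toLin'_apply, Matrix.toLin'_toMatrix']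

lemma conj_at_equilibrium {n : ℕ} {f g : (Fin n → ℝ) → (Fin n → ℝ)}
    (hf : Differentiable ℝ f) (hg : Differentiable ℝ g)
    (hse : SmoothlyEquivalent f g) {x₀ : Fin n → ℝ} (hx₀ : f x₀ = 0) :
    ∃ (y : Fin n → ℝ) (M : Matrix (Fin n) (Fin n) ℝ), IsUnit M.det ∧ g y = 0 ∧
      M * jacobianMatrix f x₀ = jacobianMatrix g y * M := by
  obtain ⟨h, hinv, hli, hri, hsm, hsminv, hx⟩ := hse
  have key : ∀ x, (fderiv ℝ h x) (f x) = g (h x) := by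
    intro x
    obtain ⟨hu, heq⟩ := hx x
    have := congrArg (fun v => (jacobianMatrix h x).mulVec v) heq
    simp only [Matrix.mulVec_mulVec, Matrix.mul_nonsing_inv _ hu, Matrix.one_mulVec] at this
    rw [← this, jac_mulVec]
  refine ⟨h x₀, jacobianMatrix h x₀, (hx x₀).1, ?_, ?_⟩
  · have := key x₀; rw [hx₀, map_zero] at this; exact this.symm
  · have hdh : Differentiable ℝ h := hsm.differentiable (by simp)
    have hdfh : Differentiable ℝ (fderiv ℝ h) :=
      (hsm.fderiv_right (m := 1) (by rw [show (1 + 1 : WithTop ℕ∞) = ((1 + 1 : ℕ∞) : WithTop ℕ∞) by norm_cast]; exact WithTop.coe_le_coe.2 le_top)).differentiable one_ne_zero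
    have heqfun : (fun x => (fderiv ℝ h x) (f x)) = (fun x => g (h x)) := funext key
    have hL : fderiv ℝ (fun x => (fderiv ℝ h x) (f x)) x₀
        = fderiv ℝ (g ∘ h) x₀ := by
      rw [show ((g ∘ h : (Fin n → ℝ) → Fin n → ℝ)) = fun x => (fderiv ℝ h x) (f x) from
        heqfun.symm]
    rw [fderiv_clm_apply (hdfh x₀) (hf x₀), fderiv_comp x₀ (hg (h x₀)) (hdh x₀)] at hL
    rw [hx₀] at hL
    simp only [map_zero, add_zero] at hL
    have := congrArg (fun L : (Fin n → ℝ) →L[ℝ] (Fin n → ℝ) => LinearMap.toMatrix' L.toLinearMap) hL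
    simp only [ContinuousLinearMap.toLinearMap_comp, LinearMap.toMatrix'_comp] at this
    exact this

lemma sim_trace_det {n : ℕ} {M A B : Matrix (Fin n) (Fin n) ℝ}
    (hM : IsUnit M.det) (h : M * A = B * M) :
    A.trace = B.trace ∧ A.det = B.det := by
  have hA : A = M⁻¹ * (B * M) := by
    rw [← h, ← Matrix.mul_assoc, Matrix.nonsing_inv_mul _ hM, Matrix.one_mul]
  constructor
  · rw [hA, Matrix.trace_mul_comm, Matrix.mul_assoc, Matrix.mul_nonsing_inv _ hM,
      Matrix.mul_one]
  · have hd : M.det * A.det = B.det * M.det := by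
      rw [← Matrix.det_mul, ← Matrix.det_mul, h]
    have hne : M.det ≠ 0 := by
      intro h0; rw [h0] at hM; exact (by norm_num : ¬ IsUnit (0:ℝ)) hM
    exact mul_left_cancel₀ hne (by linarith [hd])

lemma sim_invariants {n : ℕ} {M A B : Matrix (Fin n) (Fin n) ℝ}
    (hM : IsUnit M.det) (h : M * A = B * M) :
    A.trace = B.trace ∧ (A*A).trace = (B*B).trace ∧ A.det = B.det := by
  have h2 : M * (A*A) = (B*B) * M := by
    rw [← Matrix.mul_assoc, h, Matrix.mul_assoc, h, ← Matrix.mul_assoc]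
  exact ⟨(sim_trace_det hM h).1, (sim_trace_det hM h2).1, (sim_trace_det hM h).2⟩

lemma algebra_contradiction (a b c y0 y1 y2 w0 w1 w2 : ℝ)
    (hy1 : a * (y1 - y0) = 0) (hy2 : c * y0 - y0 * y2 - y1 = 0) (hy3 : y0 * y1 - b * y2 = 0)
    (hw1 : a * (w1 - w0) = 0) (hw2 : c * w0 - w0 * w2 - w1 = 0) (hw3 : w0 * w1 - b * w2 = 0)
    (htr : a + b = 21)
    (hdy : -(a*b) - a*y0^2 + a*b*c - a*b*y2 - a*y0*y1 = 2475)
    (hdw : -(a*b) - a*w0^2 + a*b*c - a*b*w2 - a*w0*w1 = -4950)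
    (hty : a^2 + 1 + b^2 + 2*a*c - 2*a*y2 - 2*y0^2 = 1304)
    (htw : a^2 + 1 + b^2 + 2*a*c - 2*a*w2 - 2*w0^2 = 204) : False := by
  have ha : a ≠ 0 := by
    rintro rfl; norm_num at hdy
  have hy10 : y1 = y0 := by
    rcases mul_eq_zero.1 hy1 with h | h
    · exact absurd h ha
    · linarith
  have hw10 : w1 = w0 := by
    rcases mul_eq_zero.1 hw1 with h | h
    · exact absurd h ha
    · linarith
  have hb : b ≠ 0 := by
    rintro rfl
    have h1 : y0^2 = 0 := by linear_combination hy3 - y0*hy10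
    have h0 : y0 = 0 := by
      have := sq_eq_zero_iff.1 h1; exact this
    rw [hy10, h0] at hdy
    norm_num at hdy
  have hKy : (a*b*(c-1) = 2475 ∧ y0 = 0 ∧ y2 = 0) ∨
      (a*y0^2 = -2475/2 ∧ y0^2 = b*(c-1)) := by
    rcases eq_or_ne y0 0 with h0 | h0
    · left
      have hbz : b*y2 = 0 := by linear_combination -hy3 + y1*h0
      have hz : y2 = 0 := by
        rcases mul_eq_zero.1 hbz with h | h
        · exact absurd h hb
        · exact h
      exact ⟨by linear_combination hdy + (a*y0 + a*y1)*h0 + a*b*hz, h0, hz⟩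
    · right
      have hz : y2 = c - 1 := by
        have h2 : y0*(c - y2 - 1) = 0 := by linear_combination hy2 + hy10
        rcases mul_eq_zero.1 h2 with h | h
        · exact absurd h h0
        · linarith
      exact ⟨by linear_combination (-1/2)*hdy - (a*b/2)*hz - (a*y0/2)*hy10,
        by linear_combination hy3 - y0*hy10 + b*hz⟩
  have hKw : (a*b*(c-1) = -4950) ∨
      (a*w0^2 = 2475 ∧ w0^2 = b*(c-1) ∧ w2 = c - 1) := by
    rcases eq_or_ne w0 0 with h0 | h0
    · left
      have hbz : b*w2 = 0 := by linear_combination -hw3 + w1*h0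
      have hz : w2 = 0 := by
        rcases mul_eq_zero.1 hbz with h | h
        · exact absurd h hb
        · exact h
      linear_combination hdw + (a*w0 + a*w1)*h0 + a*b*hz
    · right
      have hz : w2 = c - 1 := by
        have h2 : w0*(c - w2 - 1) = 0 := by linear_combination hw2 + hw10
        rcases mul_eq_zero.1 h2 with h | h
        · exact absurd h h0
        · linarith
      exact ⟨by linear_combination (-1/2)*hdw - (a*b/2)*hz - (a*w0/2)*hw10,
        by linear_combination hw3 - w0*hw10 + b*hz, hz⟩
  rcases hKy with ⟨hK1, hy0, hz0⟩ | ⟨hK1, hK2⟩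
  · rcases hKw with hK2 | ⟨hw4, hw5, hwz⟩
    · linarith
    · -- main case
      have e2 : a^2 + 1 + b^2 + 2*a*c = 1304 := by
        linear_combination hty + 2*a*hz0 + 2*y0*hy0
      have e5 : a^2 + 1 + b^2 + 2*a - 2*w0^2 = 204 := by
        linear_combination htw + 2*a*hwz
      have t1 : a*c = 431 + 21*a - a^2 := by
        linear_combination e2/2 - ((b + 21 - a)/2)*htr
      have t2 : w0^2 = a^2 - 20*a + 119 := by
        linear_combination (-1/2)*e5 + ((b + 21 - a)/2)*htr
      have t3 : a^3 - 20*a^2 + 119*a = 2475 := by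
        linear_combination hw4 - a*t2
      have t4 : a^3 - 41*a^2 - 11*a = -6576 := by
        linear_combination (-a)*hw5 + hw4 - b*t1 + (a^2 - 20*a - 431)*htr
      have q1 : 21*a^2 + 130*a = 9051 := by linear_combination t3 - t4
      have q2 : 2*a^2 - 42*a + 189 = 0 := by
        linear_combination (a/275)*q1 - (21/275)*t3
      have hav : a = 22071/1142 := by linarith
      rw [hav] at q2
      norm_num at q2
  · rcases hKw with hK3 | ⟨hw4, hw5, hwz⟩
    · have : a*b*(c-1) = -2475/2 := by linear_combination hK1 - a*hK2
      linarith
    · have h1 : a*b*(c-1) = -2475/2 := by linear_combination hK1 - a*hK2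
      have h2 : a*b*(c-1) = 2475 := by linear_combination hw4 - a*hw5
      linarith

theorem chen_not_smoothly_equivalent_to_lorenz :
    ∀ a b c : ℝ, ¬ SmoothlyEquivalent (chen 45 5 28) (lorenz a b c) := by
  intro a b c hse
  have hchen_diff : Differentiable ℝ (chen 45 5 28) :=
    fun p => (hasFDerivAt_chen 45 5 28 p).differentiableAt
  have hlor_diff : Differentiable ℝ (lorenz a b c) :=
    fun p => (hasFDerivAt_lorenz a b c p).differentiableAt
  set s := Real.sqrt 55 with hsdef
  have hs : s^2 = 55 := Real.sq_sqrt (by norm_num)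
  have hE0 : chen 45 5 28 (0 : Fin 3 → ℝ) = 0 := by
    funext i; fin_cases i <;> simp [chen]
  have hE1 : chen 45 5 28 ![s, s, 11] = 0 := by
    funext i
    fin_cases i <;> simp [chen] <;> nlinarith [hs]
  obtain ⟨y, M, hMu, hy, hMeq⟩ := conj_at_equilibrium hchen_diff hlor_diff hse hE0
  obtain ⟨w, N, hNu, hw, hNeq⟩ := conj_at_equilibrium hchen_diff hlor_diff hse hE1
  rw [jac_eq (hasFDerivAt_chen 45 5 28 (0 : Fin 3 → ℝ)),
    jac_eq (hasFDerivAt_lorenz a b c y)] at hMeq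
  rw [jac_eq (hasFDerivAt_chen 45 5 28 ![s, s, 11]),
    jac_eq (hasFDerivAt_lorenz a b c w)] at hNeq
  obtain ⟨htr0, hts0, hdet0⟩ := sim_invariants hMu hMeq
  obtain ⟨htr1, hts1, hdet1⟩ := sim_invariants hNu hNeq
  -- equilibrium equations for y and w
  have hy1 : a * (y 1 - y 0) = 0 := by
    have := congrFun hy 0; simpa [lorenz] using this
  have hy2 : c * y 0 - y 0 * y 2 - y 1 = 0 := by
    have := congrFun hy 1; simpa [lorenz] using this
  have hy3 : y 0 * y 1 - b * y 2 = 0 := by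
    have := congrFun hy 2; simpa [lorenz] using this
  have hw1 : a * (w 1 - w 0) = 0 := by
    have := congrFun hw 0; simpa [lorenz] using this
  have hw2 : c * w 0 - w 0 * w 2 - w 1 = 0 := by
    have := congrFun hw 1; simpa [lorenz] using this
  have hw3 : w 0 * w 1 - b * w 2 = 0 := by
    have := congrFun hw 2; simpa [lorenz] using this
  -- invariant equations
  simp [Matrix.trace, Matrix.diag, Fin.sum_univ_three, chenJ, lorenzJ] at htr0
  rw [Matrix.det_fin_three, Matrix.det_fin_three] at hdet0 hdet1
  simp [chenJ, lorenzJ] at hdet0 hdet1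
  simp only [Matrix.trace, Matrix.diag, Matrix.mul_apply, Fin.sum_univ_three] at hts0 hts1
  simp [chenJ, lorenzJ] at hts0 hts1
  have htr : a + b = 21 := by linarith
  have hdy : -(a*b) - a*(y 0)^2 + a*b*c - a*b*(y 2) - a*(y 0)*(y 1) = 2475 := by
    linear_combination -hdet0
  have hdw : -(a*b) - a*(w 0)^2 + a*b*c - a*b*(w 2) - a*(w 0)*(w 1) = -4950 := by
    linear_combination -hdet1 - 90*hs
  have hty : a^2 + 1 + b^2 + 2*a*c - 2*a*(y 2) - 2*(y 0)^2 = 1304 := by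
    linear_combination -hts0
  have htw : a^2 + 1 + b^2 + 2*a*c - 2*a*(w 2) - 2*(w 0)^2 = 204 := by
    linear_combination -hts1 - 2*hs
  exact algebra_contradiction a b c (y 0) (y 1) (y 2) (w 0) (w 1) (w 2)
    hy1 hy2 hy3 hw1 hw2 hw3 htr hdy hdw hty htw
end

section
/- If a ≠ 0 and b(c−1) > 0, then the equilibrium set of the Lorenz system with parameters a, b, c consists of exactly the three points P₁ = (0,0,0), P₂ = (−√(b(c−1)), −√(b(c−1)), c−1), and P₃ = (√(b(c−1)), √(b(c−1)), c−1). -/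
/-!
Since `a ≠ 0`, an equilibrium lies on `y = x`, where the second equation factors as
`x (c - 1 - z) = 0`: either `x = 0`, forcing the origin, or `z = c - 1` and `x² = b (c - 1)`.
-/

section Lorenz

variable {a b c : ℝ} {p : Fin 3 → ℝ}

theorem lorenz_eq_zero_iff :
    lorenz a b c p = 0 ↔
      a * (p 1 - p 0) = 0 ∧ c * p 0 - p 0 * p 2 - p 1 = 0 ∧ p 0 * p 1 - b * p 2 = 0 := by
  simp [funext_iff, Fin.forall_fin_succ, lorenz]

theorem lorenz_eq_zero_iff_of_ne_zero (ha : a ≠ 0) (hb : b ≠ 0) :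
    lorenz a b c p = 0 ↔
      p = ![0, 0, 0] ∨ ∃ x, x ^ 2 = b * (c - 1) ∧ p = ![x, x, c - 1] := by
  have hp : p = ![p 0, p 1, p 2] := by
    ext i; fin_cases i <;> rfl
  rw [lorenz_eq_zero_iff]
  constructor
  · rintro ⟨h₀, h₁, h₂⟩
    have hyx : p 1 = p 0 := by
      linarith [(mul_eq_zero.1 h₀).resolve_left ha]
    rw [hyx] at h₁ h₂ hp
    have hfac : p 0 * (c - 1 - p 2) = 0 := by linarith
    rcases mul_eq_zero.1 hfac with hx | hz
    · left
      have hz : p 2 = 0 := by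
        rw [hx] at h₂
        simpa [hb] using h₂
      rw [hp, hx, hz]
    · right
      have hz : p 2 = c - 1 := by linarith
      rw [hz] at h₂ hp
      exact ⟨p 0, by linarith, hp⟩
  · rintro (rfl | ⟨x, hx, rfl⟩)
    · simp
    · simp only [Matrix.cons_val_zero, Matrix.cons_val_one, Matrix.cons_val_two,
        Matrix.head_cons, Matrix.tail_cons]
      exact ⟨by ring, by ring, by linear_combination hx⟩

end Lorenz

theorem lorenz_three_equilibria (a b c : ℝ) (ha : a ≠ 0) (hbc : b * (c - 1) > 0) :
    {p : Fin 3 → ℝ | lorenz a b c p = 0} =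
      {![0, 0, 0],
       ![-Real.sqrt (b * (c - 1)), -Real.sqrt (b * (c - 1)), c - 1],
       ![Real.sqrt (b * (c - 1)), Real.sqrt (b * (c - 1)), c - 1]} := by
  ext p
  rw [Set.mem_ofPred_eq, lorenz_eq_zero_iff_of_ne_zero ha (left_ne_zero_of_mul hbc.ne')]
  conv_lhs => rw [← Real.sq_sqrt hbc.le]
  simp only [sq_eq_sq_iff_eq_or_eq_neg, or_and_right, exists_or, exists_eq_left,
    Set.mem_insert_iff, Set.mem_singleton_iff]
  tauto
end

section
/- Let a, b, c and a', b', c' be real numbers satisfying the four equations a + b + 1 = a' + b' − c', a + ab − ac + b = a'² + a'b' − 2a'c' − b'c', ab(c−1) = a'b'(2c'−a'), and ab + bc = b'c'. Then M₀(a',b',c') = 0. -/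
noncomputable def M0 (u v w d : ℝ) : ℝ :=
  Matrix.det !![1, -u, v, -w, 0;
                0, 1, -u, v, -w;
                u - 1, u + v - u ^ 2 - d, (u - 1) * d, 0, 0;
                0, u - 1, u + v - u ^ 2 - d, (u - 1) * d, 0;
                0, 0, u - 1, u + v - u ^ 2 - d, (u - 1) * d]

noncomputable def M0Chen (a' b' c' : ℝ) : ℝ :=
  M0 (a' + b' - c') (a' ^ 2 + a' * b' - 2 * a' * c' - b' * c')
    (-(a' * b' * (2 * c' - a'))) (b' * c')

/-! The matrix of `M0` is the Sylvester matrix of the cubic `X³ - uX² + vX - w` and the quadratic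
`(u - 1)X² + (u + v - u² - d)X + (u - 1)d`, so `M0` is their resultant. Under the four equations the
cubic is the Lorenz characteristic polynomial `(X - b)(X² - (a + 1)X + a(1 - c))` and the quadratic
is `(a + b)(X - b)(X - a - c)`; the common root `b` makes the resultant vanish. -/

/-- A common root `x` gives the kernel vector `(x⁴, x³, x², x, 1)` of the Sylvester matrix. -/
lemma M0_eq_zero_of_common_root {u v w d : ℝ} (x : ℝ)
    (hcubic : x ^ 3 - u * x ^ 2 + v * x - w = 0)
    (hquadratic : (u - 1) * x ^ 2 + (u + v - u ^ 2 - d) * x + (u - 1) * d = 0) :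
    M0 u v w d = 0 := by
  refine Matrix.exists_mulVec_eq_zero_iff.mp ⟨![x ^ 4, x ^ 3, x ^ 2, x, 1], ?_, ?_⟩
  · intro h
    simpa using congr_fun h 4
  · ext i
    fin_cases i <;>
      simp only [Matrix.mulVec, dotProduct, Fin.sum_univ_five, Fin.zero_eta, Fin.mk_one, Fin.reduceFinMk,
        Matrix.of_apply, Matrix.cons_val, Matrix.cons_val_zero, Matrix.cons_val_one, Pi.zero_apply]
    · linear_combination x * hcubic
    · linear_combination hcubic
    · linear_combination x ^ 2 * hquadratic
    · linear_combination x * hquadratic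
    · linear_combination hquadratic

theorem matching_charpolys_implies_M0_zero (a b c a' b' c' : ℝ)
    (h1 : a + b + 1 = a' + b' - c')
    (h2 : a + a * b - a * c + b = a' ^ 2 + a' * b' - 2 * a' * c' - b' * c')
    (h3 : a * b * (c - 1) = a' * b' * (2 * c' - a'))
    (h4 : a * b + b * c = b' * c') :
    M0Chen a' b' c' = 0 := by
  unfold M0Chen
  rw [← h1, ← h2, ← h3, ← h4]
  exact M0_eq_zero_of_common_root b (by ring) (by ring)
end
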